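/- arXiv:1311.1024 — 9 statements merged into one kernel-verified Lean document; each statement's English description precedes it below -/
import Mathlib

section
/- Let A = {1, a₂, a₃} with 1 < a₂ < a₃, let s ≥ 1 and let k, p be natural numbers with p ≤ k. Suppose that for every x with k·a₃ ≤ x < (k+1)·a₃ there exist natural numbers c₁, c₂, c₃ with c₃·a₃ + c₂·a₂ + c₁ = x, c₁ + c₂ + c₃ ≤ s and c₃ ≥ k − p (i.e. A generates the k-th stride with maximum order p). Then A generates, using at most s stamps, every value x with p·a₃ ≤ x < k·a₃. -/
def Generates (a₂ a₃ s x : ℕ) : Prop :=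
  ∃ c₁ c₂ c₃ : ℕ, c₃ * a₃ + c₂ * a₂ + c₁ = x ∧ c₁ + c₂ + c₃ ≤ s

/-! A value `x` in stride `j`, where `p ≤ j < k`, is carried into stride `k` by adding
`(k - j) * a₃`. The representation given there uses at least `k - p ≥ k - j` copies of `a₃`,
and dropping `k - j` of them represents `x` with no more stamps. -/

theorem generates_of_add_mul {a₂ a₃ s x m c₁ c₂ c₃ : ℕ}
    (hsum : c₃ * a₃ + c₂ * a₂ + c₁ = x + m * a₃) (hstamps : c₁ + c₂ + c₃ ≤ s) (hm : m ≤ c₃) :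
    Generates a₂ a₃ s x := by
  refine ⟨c₁, c₂, c₃ - m, ?_, by omega⟩
  have hsplit : (c₃ - m) * a₃ + m * a₃ = c₃ * a₃ := by
    rw [← add_mul, Nat.sub_add_cancel hm]
  omega

theorem add_sub_div_mul_mem_stride {a k x : ℕ} (hx : x < k * a) :
    k * a ≤ x + (k - x / a) * a ∧ x + (k - x / a) * a < (k + 1) * a := by
  have ha : 0 < a := Nat.pos_of_mul_pos_left (Nat.zero_lt_of_lt hx)
  have hk : x / a < k := (Nat.div_lt_iff_lt_mul ha).2 hx
  have hsplit : (k - x / a) * a + x / a * a = k * a := by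
    rw [← add_mul, Nat.sub_add_cancel hk.le]
  have hdiv := Nat.div_add_mod' x a
  have hmod := Nat.mod_lt x ha
  rw [add_one_mul]
  constructor <;> omega

theorem stmt0_general (a₂ a₃ s k p : ℕ)
    (hgen : ∀ x : ℕ, k * a₃ ≤ x → x < (k + 1) * a₃ →
      ∃ c₁ c₂ c₃ : ℕ, c₃ * a₃ + c₂ * a₂ + c₁ = x ∧ c₁ + c₂ + c₃ ≤ s ∧ k - p ≤ c₃) :
    ∀ x : ℕ, p * a₃ ≤ x → x < k * a₃ → Generates a₂ a₃ s x := by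
  intro x hpx hxk
  have hp : p ≤ x / a₃ :=
    (Nat.le_div_iff_mul_le (Nat.pos_of_mul_pos_left (Nat.zero_lt_of_lt hxk))).2 hpx
  obtain ⟨hlo, hhi⟩ := add_sub_div_mul_mem_stride hxk
  obtain ⟨c₁, c₂, c₃, hsum, hstamps, hc₃⟩ := hgen _ hlo hhi
  exact generates_of_add_mul hsum hstamps (by omega)

theorem stmt0 (a₂ a₃ s k p : ℕ) (ha₂ : 1 < a₂) (ha₃ : a₂ < a₃) (hs : 1 ≤ s) (hpk : p ≤ k)
    (hgen : ∀ x : ℕ, k * a₃ ≤ x → x < (k + 1) * a₃ →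
      ∃ c₁ c₂ c₃ : ℕ, c₃ * a₃ + c₂ * a₂ + c₁ = x ∧ c₁ + c₂ + c₃ ≤ s ∧ k - p ≤ c₃) :
    ∀ x : ℕ, p * a₃ ≤ x → x < k * a₃ → Generates a₂ a₃ s x :=
  stmt0_general a₂ a₃ s k p hgen
end

section
/- Let A = {1, a₂, a₃} with 1 < a₂ < a₃ and s ≥ 1, and suppose A has a non-trivial cover C(A,3,s). Then there exist natural numbers k and Y with C(A,3,s) = (k+1)·a₃ + Y, 0 ≤ Y < a₃ − 1 (in particular Y ≠ a₃ − 1), and 0 ≤ k < s. -/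
def IsCover (a₂ a₃ s X : ℕ) : Prop :=
  (∀ x : ℕ, 1 ≤ x → x ≤ X → Generates a₂ a₃ s x) ∧ ¬ Generates a₂ a₃ s (X + 1)

/-
Every stamp is worth at most a₃, so the cover is at most s·a₃. Write the cover as q·a₃ + r with
0 ≤ r < a₃ and q ≥ 1. If q < s, then r = a₃ - 1 is impossible, since X + 1 = (q + 1)·a₃ would be
generated by q + 1 ≤ s copies of a₃. If q ≥ s, the bound forces X = s·a₃, i.e. k = s - 1, Y = 0.
-/

theorem Generates.le_mul {a₂ a₃ s x : ℕ} (h : Generates a₂ a₃ s x) (ha₂ : a₂ ≤ a₃)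
    (ha₃ : 1 ≤ a₃) : x ≤ s * a₃ := by
  obtain ⟨c₁, c₂, c₃, rfl, hsum⟩ := h
  calc c₃ * a₃ + c₂ * a₂ + c₁
      ≤ c₃ * a₃ + c₂ * a₃ + c₁ * a₃ := by gcongr; exact Nat.le_mul_of_pos_right c₁ ha₃
    _ = (c₁ + c₂ + c₃) * a₃ := by ring
    _ ≤ s * a₃ := Nat.mul_le_mul_right _ hsum

theorem generates_mul_right {a₂ a₃ s c : ℕ} (hc : c ≤ s) : Generates a₂ a₃ s (c * a₃) :=
  ⟨0, 0, c, by simp, by simpa using hc⟩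

theorem IsCover.mod_ne_pred {a₂ a₃ s X : ℕ} (hX : IsCover a₂ a₃ s X) (ha₃ : 0 < a₃)
    (hq : X / a₃ < s) : X % a₃ ≠ a₃ - 1 := by
  intro hr
  apply hX.2
  have hsucc : X + 1 = (X / a₃ + 1) * a₃ := by
    have := Nat.div_add_mod X a₃
    rw [add_mul, one_mul, mul_comm]
    omega
  exact hsucc ▸ generates_mul_right hq

theorem stmt1_general (a₂ a₃ s X : ℕ) (ha₂ : 1 < a₂) (ha₃ : a₂ < a₃)
    (hX : IsCover a₂ a₃ s X) (hnt : a₃ ≤ X) :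
    ∃ k Y : ℕ, X = (k + 1) * a₃ + Y ∧ Y < a₃ - 1 ∧ k < s := by
  have hpos : 0 < a₃ := by omega
  have hbound : X ≤ s * a₃ := (hX.1 X (by omega) le_rfl).le_mul ha₃.le hpos
  have hdiv := Nat.div_add_mod X a₃
  have hq : 1 ≤ X / a₃ := (Nat.le_div_iff_mul_le hpos).mpr (by omega)
  rcases lt_or_ge (X / a₃) s with hqs | hqs
  · have hr : X % a₃ < a₃ := Nat.mod_lt X hpos
    have hr_ne := hX.mod_ne_pred hpos hqs
    refine ⟨X / a₃ - 1, X % a₃, ?_, by omega, by omega⟩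
    rw [Nat.sub_add_cancel hq, mul_comm]
    omega
  · have hsX : s * a₃ ≤ X := (Nat.le_div_iff_mul_le hpos).mp hqs
    have hs : 1 ≤ s := Nat.pos_of_ne_zero (by rintro rfl; omega)
    refine ⟨s - 1, 0, ?_, by omega, by omega⟩
    rw [Nat.sub_add_cancel hs]
    omega

theorem stmt1 (a₂ a₃ s X : ℕ) (ha₂ : 1 < a₂) (ha₃ : a₂ < a₃) (hs : 1 ≤ s)
    (hX : IsCover a₂ a₃ s X) (hnt : a₃ ≤ X) :
    ∃ k Y : ℕ, X = (k + 1) * a₃ + Y ∧ Y < a₃ - 1 ∧ k < s :=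
  stmt1_general a₂ a₃ s X ha₂ ha₃ hX hnt
end

section
/- Let A = {1, a₂, a₃} with 1 < a₂ < a₃ and s ≥ 1 have a non-trivial cover, and write C(A,3,s) = (k+1)·a₃ + Y with 0 ≤ Y < a₃ − 1 and 0 ≤ k < s. Then there exists p ≤ k such that A is an (s−k)-stride generator SG(s−k, p); moreover y = Y + 1 is a break of SG(s−k, p), the break order of y (if y is not canonical) exceeds k+1, and every break of SG(s−k, p) smaller than y is non-canonical with break order ≤ k+1 (so y is the first break with break order exceeding k+1, canonical breaks counting as having infinite break order). -/
def SGRep (n a₂ a₃ x i : ℕ) : Prop :=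
  ∃ c₁ c₂ : ℕ, x + i * a₃ = c₂ * a₂ + c₁ ∧ c₂ + c₁ ≤ n + i

def SGBreakRep (n a₂ a₃ y j : ℕ) : Prop :=
  ∃ c₁ c₂ : ℕ, y + j * a₃ = c₂ * a₂ + c₁ ∧ c₂ + c₁ ≤ n + j - 1

def IsSG (n p a₂ a₃ : ℕ) : Prop :=
  (∀ x : ℕ, 0 < x → x < a₃ → ∃ i ≤ p, SGRep n a₂ a₃ x i) ∧
  (∃ x : ℕ, 0 < x ∧ x < a₃ ∧ SGRep n a₂ a₃ x p ∧ ∀ i < p, ¬ SGRep n a₂ a₃ x i) ∧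
  (∃ y : ℕ, 0 < y ∧ y < a₃ ∧ ∀ j ≤ p + 1, ¬ SGBreakRep n a₂ a₃ y j)

def IsBreak (n p a₂ a₃ y : ℕ) : Prop :=
  0 < y ∧ y < a₃ ∧ ∀ j ≤ p + 1, ¬ SGBreakRep n a₂ a₃ y j

def BreakOrder (n a₂ a₃ y q : ℕ) : Prop :=
  SGBreakRep n a₂ a₃ y q ∧ ∀ j < q, ¬ SGBreakRep n a₂ a₃ y j

/-!
Representing `x + m·a₃` (with `x < a₃`) by at most `s` stamps uses at most `m` stamps of value
`a₃`; moving the `m - j` of them that are used to the other side leaves a representation of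
`x + j·a₃` by `1`s and `a₂`s. So the cover `(k+1)·a₃ + Y` makes every residue `0 < x < a₃` an
`SGRep` of order at most `k` with `n = s - k`, while the non-generated value `(k+1)·a₃ + Y + 1`
makes `Y + 1` a break with no `SGBreakRep` up to order `k + 1`, and the smaller residues, being
generated with `k + 1` extra copies of `a₃`, have one. The stride order `p` is the least order
for which (SG1) holds.
-/

section Stamps

variable {a₂ a₃ : ℕ}

theorem Generates.exists_reduced_rep {s x m : ℕ} (hx : x < a₃)
    (h : Generates a₂ a₃ s (x + m * a₃)) :
    ∃ j ≤ m, ∃ c₁ c₂ : ℕ, x + j * a₃ = c₂ * a₂ + c₁ ∧ c₂ + c₁ + (m - j) ≤ s := by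
  obtain ⟨c₁, c₂, c₃, heq, hle⟩ := h
  have hc₃ : c₃ ≤ m := by
    by_contra! hm
    have : (m + 1) * a₃ ≤ c₃ * a₃ := Nat.mul_le_mul_right _ hm
    rw [add_one_mul] at this
    omega
  refine ⟨m - c₃, by omega, c₁, c₂, ?_, by omega⟩
  have : (m - c₃) * a₃ + c₃ * a₃ = m * a₃ := by rw [← Nat.add_mul, Nat.sub_add_cancel hc₃]
  omega

theorem exists_sgRep_of_generates {s k x : ℕ} (hx : x < a₃)
    (h : Generates a₂ a₃ s (x + k * a₃)) : ∃ i ≤ k, SGRep (s - k) a₂ a₃ x i := by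
  obtain ⟨i, hik, c₁, c₂, heq, hle⟩ := h.exists_reduced_rep hx
  exact ⟨i, hik, c₁, c₂, heq, by omega⟩

theorem exists_sgBreakRep_of_generates {s k y : ℕ} (hy : y < a₃)
    (h : Generates a₂ a₃ s (y + (k + 1) * a₃)) : ∃ j ≤ k + 1, SGBreakRep (s - k) a₂ a₃ y j := by
  obtain ⟨j, hjk, c₁, c₂, heq, hle⟩ := h.exists_reduced_rep hy
  exact ⟨j, hjk, c₁, c₂, heq, by omega⟩

theorem SGBreakRep.generates {s k y j : ℕ} (hk : k < s) (h : SGBreakRep (s - k) a₂ a₃ y j)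
    (hj : j ≤ k + 1) : Generates a₂ a₃ s (y + (k + 1) * a₃) := by
  obtain ⟨c₁, c₂, heq, hle⟩ := h
  refine ⟨c₁, c₂, k + 1 - j, ?_, by omega⟩
  have : (k + 1 - j) * a₃ + j * a₃ = (k + 1) * a₃ := by
    rw [← Nat.add_mul, Nat.sub_add_cancel hj]
  omega

theorem exists_breakOrder_le {n y j : ℕ} (h : SGBreakRep n a₂ a₃ y j) :
    ∃ q, BreakOrder n a₂ a₃ y q ∧ q ≤ j := by
  classical
  have hex : ∃ j, SGBreakRep n a₂ a₃ y j := ⟨j, h⟩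
  exact ⟨Nat.find hex, ⟨Nat.find_spec hex, fun _ => Nat.find_min hex⟩, Nat.find_le h⟩

theorem exists_least_stride_order {n k : ℕ} (ha₃ : 1 < a₃)
    (h : ∀ x, 0 < x → x < a₃ → ∃ i ≤ k, SGRep n a₂ a₃ x i) :
    ∃ p ≤ k, (∀ x, 0 < x → x < a₃ → ∃ i ≤ p, SGRep n a₂ a₃ x i) ∧
      ∃ x, 0 < x ∧ x < a₃ ∧ SGRep n a₂ a₃ x p ∧ ∀ i < p, ¬ SGRep n a₂ a₃ x i := by
  classical
  have hex : ∃ p, ∀ x, 0 < x → x < a₃ → ∃ i ≤ p, SGRep n a₂ a₃ x i := ⟨k, h⟩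
  refine ⟨Nat.find hex, Nat.find_min' hex h, Nat.find_spec hex, ?_⟩
  cases hp : Nat.find hex with
  | zero =>
    obtain ⟨i, hi, hrep⟩ := Nat.find_spec hex 1 one_pos ha₃
    obtain rfl : i = 0 := by omega
    exact ⟨1, one_pos, ha₃, hrep, by omega⟩
  | succ q =>
    obtain ⟨x, hx0, hxa, hnone⟩ : ∃ x, 0 < x ∧ x < a₃ ∧ ∀ i ≤ q, ¬ SGRep n a₂ a₃ x i := by
      simpa using Nat.find_min hex (show q < Nat.find hex by omega)
    obtain ⟨i, hi, hrep⟩ := Nat.find_spec hex x hx0 hxa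
    have hiq : i = q + 1 := by
      by_contra hne
      exact hnone i (by omega) hrep
    exact ⟨x, hx0, hxa, hiq ▸ hrep, fun j hj => hnone j (by omega)⟩

end Stamps

theorem stmt2_general (a₂ a₃ s X k Y : ℕ)
    (hX : IsCover a₂ a₃ s X)
    (hXk : X = (k + 1) * a₃ + Y) (hY : Y < a₃ - 1) (hk : k < s) :
    ∃ p ≤ k, IsSG (s - k) p a₂ a₃ ∧
      IsBreak (s - k) p a₂ a₃ (Y + 1) ∧
      (∀ q : ℕ, BreakOrder (s - k) a₂ a₃ (Y + 1) q → k + 1 < q) ∧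
      (∀ y' : ℕ, IsBreak (s - k) p a₂ a₃ y' → y' < Y + 1 →
        ∃ q : ℕ, BreakOrder (s - k) a₂ a₃ y' q ∧ q ≤ k + 1) := by
  subst hXk
  have hrep (x : ℕ) (hx0 : 0 < x) (hx : x < a₃) : ∃ i ≤ k, SGRep (s - k) a₂ a₃ x i :=
    exists_sgRep_of_generates hx (hX.1 _ (by omega) (by rw [add_one_mul]; omega))
  have hbreak (j : ℕ) (hj : j ≤ k + 1) : ¬ SGBreakRep (s - k) a₂ a₃ (Y + 1) j := fun hj' =>
    hX.2 (by rw [add_assoc, add_comm]; exact hj'.generates hk hj)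
  obtain ⟨p, hpk, hSG1, hSG2⟩ := exists_least_stride_order (by omega) hrep
  have hYbreak : IsBreak (s - k) p a₂ a₃ (Y + 1) :=
    ⟨Y.succ_pos, by omega, fun j hj => hbreak j (by omega)⟩
  refine ⟨p, hpk, ⟨hSG1, hSG2, Y + 1, hYbreak⟩, hYbreak, fun q hq => ?_,
    fun y ⟨hy0, hya, _⟩ hyY => ?_⟩
  · by_contra! hqk
    exact hbreak q hqk hq.1
  · obtain ⟨j, hj, hyrep⟩ :=
      exists_sgBreakRep_of_generates (k := k) hya (hX.1 _ (by omega) (by omega))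
    obtain ⟨q, hq, hqj⟩ := exists_breakOrder_le hyrep
    exact ⟨q, hq, hqj.trans hj⟩

theorem stmt2 (a₂ a₃ s X k Y : ℕ) (ha₂ : 1 < a₂) (ha₃ : a₂ < a₃) (hs : 1 ≤ s)
    (hX : IsCover a₂ a₃ s X) (hnt : a₃ ≤ X)
    (hXk : X = (k + 1) * a₃ + Y) (hY : Y < a₃ - 1) (hk : k < s) :
    ∃ p ≤ k, IsSG (s - k) p a₂ a₃ ∧
      IsBreak (s - k) p a₂ a₃ (Y + 1) ∧
      (∀ q : ℕ, BreakOrder (s - k) a₂ a₃ (Y + 1) q → k + 1 < q) ∧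
      (∀ y' : ℕ, IsBreak (s - k) p a₂ a₃ y' → y' < Y + 1 →
        ∃ q : ℕ, BreakOrder (s - k) a₂ a₃ y' q ∧ q ≤ k + 1) :=
  stmt2_general a₂ a₃ s X k Y hX hXk hY hk
end

section
/- Each set A = {1, a₂, a₃} with 1 < a₂ < a₃ defines a unique canonical stride generator: if A is both an n-stride generator SG(n,p) and an n′-stride generator SG(n′,p′), and both stride generators are canonical, then n = n′ and p = p′. -/
def CanonicalBreak (n a₂ a₃ y : ℕ) : Prop :=
  ∀ j : ℕ, ¬ SGBreakRep n a₂ a₃ y j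

/-!
A representation of `x + i·a₃` with at most `n + i` summands is a representation with at most
`n' + i - 1` summands whenever `n < n'`. So a canonical break of an `n'`-stride generator is a
value that (SG1) of an `n`-stride generator must still cover, forcing `n' ≤ n`; symmetry gives
`n = n'`. For a fixed `n`, the witness of (SG2) for one order is covered by (SG1) of the other
within that order, so the orders bound each other.
-/

theorem SGRep.sgBreakRep_of_lt {n n' a₂ a₃ x i : ℕ} (h : SGRep n a₂ a₃ x i) (hlt : n < n') :
    SGBreakRep n' a₂ a₃ x i := by
  obtain ⟨c₁, c₂, hx, hc⟩ := h
  exact ⟨c₁, c₂, hx, by omega⟩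

theorem IsSG.le_of_canonicalBreak {n n' p a₂ a₃ y : ℕ} (h : IsSG n p a₂ a₃)
    (hy₀ : 0 < y) (hy : y < a₃) (hcan : CanonicalBreak n' a₂ a₃ y) : n' ≤ n := by
  by_contra! hlt
  obtain ⟨i, -, hrep⟩ := h.1 y hy₀ hy
  exact hcan i (hrep.sgBreakRep_of_lt hlt)

theorem IsSG.order_le {n p p' a₂ a₃ : ℕ} (h : IsSG n p a₂ a₃) (h' : IsSG n p' a₂ a₃) :
    p' ≤ p := by
  by_contra! hlt
  obtain ⟨x, hx₀, hx, -, hmin⟩ := h'.2.1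
  obtain ⟨i, hi, hrep⟩ := h.1 x hx₀ hx
  exact hmin i (hi.trans_lt hlt) hrep

theorem stmt5_general (a₂ a₃ n n' p p' : ℕ)
    (h1 : IsSG n p a₂ a₃) (h2 : IsSG n' p' a₂ a₃)
    (hc1 : ∀ y : ℕ, IsBreak n p a₂ a₃ y → CanonicalBreak n a₂ a₃ y)
    (hc2 : ∀ y : ℕ, IsBreak n' p' a₂ a₃ y → CanonicalBreak n' a₂ a₃ y) :
    n = n' ∧ p = p' := by
  have hn : n = n' := by
    obtain ⟨y, hy⟩ : ∃ y, IsBreak n p a₂ a₃ y := h1.2.2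
    obtain ⟨y', hy'⟩ : ∃ y', IsBreak n' p' a₂ a₃ y' := h2.2.2
    exact le_antisymm (h2.le_of_canonicalBreak hy.1 hy.2.1 (hc1 y hy))
      (h1.le_of_canonicalBreak hy'.1 hy'.2.1 (hc2 y' hy'))
  subst hn
  exact ⟨rfl, le_antisymm (h2.order_le h1) (h1.order_le h2)⟩

theorem stmt5 (a₂ a₃ n n' p p' : ℕ) (ha₂ : 1 < a₂) (ha₃ : a₂ < a₃)
    (hn : 1 ≤ n) (hn' : 1 ≤ n')
    (h1 : IsSG n p a₂ a₃) (h2 : IsSG n' p' a₂ a₃)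
    (hc1 : ∀ y : ℕ, IsBreak n p a₂ a₃ y → CanonicalBreak n a₂ a₃ y)
    (hc2 : ∀ y : ℕ, IsBreak n' p' a₂ a₃ y → CanonicalBreak n' a₂ a₃ y) :
    n = n' ∧ p = p' :=
  stmt5_general a₂ a₃ n n' p p' h1 h2 hc1 hc2
end

section
/- In a stride generator no thread is covered by another thread of different order: if {1, a₂, a₃} is an n-stride generator SG(n,p), and i, j, b₂, c₂ are natural numbers with j < i ≤ p, b₂ ≤ n + i and c₂ ≤ n + j, then it is not the case that both b₂·a₂ − i·a₃ ≥ c₂·a₂ − j·a₃ and b₂·a₂ − i·a₃ + (n + i − b₂) ≤ c₂·a₂ − j·a₃ + (n + j − c₂) (as integers); that is, the thread T_i(b₂) is not covered by the thread T_j(c₂). -/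
def threadStart (a₂ a₃ i k : ℕ) : ℤ := k * a₂ - i * a₃

def threadEnd (n a₂ a₃ i k : ℕ) : ℤ := threadStart a₂ a₃ i k + (n + i - k)

section

variable {n a₂ a₃ : ℕ}

theorem SGRep.sub_of_exchange {x i d e : ℕ} (ha₂ : 0 < a₂) (hd : d ≤ i)
    (hstart : d * a₃ ≤ e * a₂) (hend : e * a₂ + d ≤ e + d * a₃) (h : SGRep n a₂ a₃ x i) :
    SGRep n a₂ a₃ x (i - d) := by
  obtain ⟨c₁, C, hrep, hsum⟩ := h
  have hrepℤ : (x : ℤ) + i * a₃ = C * a₂ + c₁ := by exact_mod_cast hrep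
  have hsumℤ : (C : ℤ) + c₁ ≤ n + i := by exact_mod_cast hsum
  have hstartℤ : (d : ℤ) * a₃ ≤ e * a₂ := by exact_mod_cast hstart
  have hendℤ : (e : ℤ) * a₂ + d ≤ e + d * a₃ := by exact_mod_cast hend
  by_cases hC : e ≤ C
  · refine ⟨c₁ + (e * a₂ - d * a₃), C - e, ?_, ?_⟩
    · zify [hC, hd, hstart]
      linear_combination hrepℤ
    · zify [hC, hd, hstart]
      linarith
  · -- Too few strides `a₂` to trade: use units only, which is cheaper since `C·(a₂ - 1) ≤ d·(a₃ - 1)`.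
    refine ⟨x + (i - d) * a₃, 0, by ring, ?_⟩
    have hCe : (C : ℤ) * (a₂ - 1) ≤ e * (a₂ - 1) :=
      mul_le_mul_of_nonneg_right (by exact_mod_cast (not_le.mp hC).le) (by omega)
    zify [hd]
    linarith

theorem exchange_of_covered {i j b₂ c₂ : ℕ} (ha₃ : 0 < a₃) (hji : j < i)
    (hstart : threadStart a₂ a₃ j c₂ ≤ threadStart a₂ a₃ i b₂)
    (hend : threadEnd n a₂ a₃ i b₂ ≤ threadEnd n a₂ a₃ j c₂) :
    (i - j) * a₃ ≤ (b₂ - c₂) * a₂ ∧ (b₂ - c₂) * a₂ + (i - j) ≤ (b₂ - c₂) + (i - j) * a₃ := by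
  unfold threadEnd threadStart at *
  have hcb : c₂ ≤ b₂ := by
    by_contra! hbc
    have : (b₂ : ℤ) * a₂ ≤ c₂ * a₂ := by gcongr
    have : (j : ℤ) * a₃ < i * a₃ := by gcongr
    linarith
  constructor <;> zify [hcb, hji.le] <;> linarith

end

theorem stmt7_general (n p a₂ a₃ i j b₂ c₂ : ℕ) (ha₂ : 1 < a₂) (ha₃ : a₂ < a₃)
    (hsg : IsSG n p a₂ a₃) (hji : j < i) (hip : i ≤ p) :
    ¬ (((b₂ : ℤ) * a₂ - i * a₃ ≥ (c₂ : ℤ) * a₂ - j * a₃) ∧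
       ((b₂ : ℤ) * a₂ - i * a₃ + ((n : ℤ) + i - b₂) ≤
        (c₂ : ℤ) * a₂ - j * a₃ + ((n : ℤ) + j - c₂))) := by
  rintro ⟨hstart, hend⟩
  obtain ⟨-, ⟨x, -, -, hx, hminimal⟩, -⟩ := hsg
  obtain ⟨hexstart, hexend⟩ := exchange_of_covered (n := n) (by omega) hji hstart hend
  exact hminimal (p - (i - j)) (by omega)
    (hx.sub_of_exchange (by omega) (by omega) hexstart hexend)

theorem stmt7 (n p a₂ a₃ i j b₂ c₂ : ℕ) (hn : 1 ≤ n) (ha₂ : 1 < a₂) (ha₃ : a₂ < a₃)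
    (hsg : IsSG n p a₂ a₃) (hji : j < i) (hip : i ≤ p)
    (hb : b₂ ≤ n + i) (hc : c₂ ≤ n + j) :
    ¬ (((b₂ : ℤ) * a₂ - i * a₃ ≥ (c₂ : ℤ) * a₂ - j * a₃) ∧
       ((b₂ : ℤ) * a₂ - i * a₃ + ((n : ℤ) + i - b₂) ≤
        (c₂ : ℤ) * a₂ - j * a₃ + ((n : ℤ) + j - c₂))) :=
  stmt7_general n p a₂ a₃ i j b₂ c₂ ha₂ ha₃ hsg hji hip
end

section
/- Let 2 ≤ a₂ < a₃ and write a₃ = C₂·a₂ + C₁ with C₂ = ⌊a₃/a₂⌋ and 0 ≤ C₁ < a₂. If C₁ = 0 or a₂ − C₂ ≤ C₁ < a₂, then {1, a₂, a₃} is an order-0 stride generator SG(n, 0) with n = a₂ + C₂ − 2, and its least break is y = C₂·a₂ − 1. -/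
/-!
With coins `1` and `a₂`, the greedy decomposition `x = (x / a₂) * a₂ + x % a₂` uses the fewest
coins, so every condition reduces to a bound on `x / a₂ + x % a₂`. Write `a₃ = C₂ * a₂ + C₁`.
Below `a₃` this count never exceeds `n = a₂ + C₂ - 2`, and below `C₂ * a₂ - 1` it stays under `n`;
at `y = C₂ * a₂ - 1` it equals `n`, and at `y + a₃` it is `2 * C₂ + a₂ - 2` if `C₁ = 0` and
`2 * C₂ + C₁ - 1` otherwise, both larger than `n` under the hypothesis on `C₁`.
-/

namespace Nat

theorem div_add_mod_le_of_eq_mul_add {a x c₁ c₂ : ℕ} (h : x = c₂ * a + c₁) :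
    x / a + x % a ≤ c₂ + c₁ := by
  rcases a.eq_zero_or_pos with rfl | ha
  · simp [h]
  have hc₂ : c₂ ≤ x / a := (Nat.le_div_iff_mul_le ha).2 (by omega)
  obtain ⟨k, hk⟩ := Nat.exists_eq_add_of_le hc₂
  have hx := Nat.div_add_mod' x a
  have hka : k ≤ k * a := Nat.le_mul_of_pos_right k ha
  rw [hk, add_mul] at hx
  omega

theorem exists_mul_add_eq_and_add_le_iff {a x m : ℕ} :
    (∃ c₁ c₂ : ℕ, x = c₂ * a + c₁ ∧ c₂ + c₁ ≤ m) ↔ x / a + x % a ≤ m :=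
  ⟨fun ⟨_, _, h, hm⟩ => (div_add_mod_le_of_eq_mul_add h).trans hm,
    fun hm => ⟨x % a, x / a, (Nat.div_add_mod' x a).symm, hm⟩⟩

theorem mul_add_div_add_mod {a k c : ℕ} (hc : c < a) :
    (k * a + c) / a + (k * a + c) % a = k + c := by
  obtain ⟨hdiv, hmod⟩ :=
    (Nat.div_mod_unique (a := k * a + c) (d := k) (c := c) (by omega)).2 ⟨by ring, hc⟩
  rw [hdiv, hmod]

theorem mul_sub_one_div_add_mod {a k : ℕ} (ha : 0 < a) (hk : 0 < k) :
    (k * a - 1) / a + (k * a - 1) % a = k + a - 2 := by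
  obtain ⟨m, rfl⟩ : ∃ m, k = m + 1 := ⟨k - 1, by omega⟩
  have : (m + 1) * a - 1 = m * a + (a - 1) := by rw [add_one_mul]; omega
  rw [this, mul_add_div_add_mod (by omega)]
  omega

end Nat

section StrideGenerator

variable {n a₂ a₃ : ℕ}

theorem sgRep_iff {x i : ℕ} :
    SGRep n a₂ a₃ x i ↔ (x + i * a₃) / a₂ + (x + i * a₃) % a₂ ≤ n + i :=
  Nat.exists_mul_add_eq_and_add_le_iff

theorem sgBreakRep_iff {y j : ℕ} :
    SGBreakRep n a₂ a₃ y j ↔ (y + j * a₃) / a₂ + (y + j * a₃) % a₂ ≤ n + j - 1 :=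
  Nat.exists_mul_add_eq_and_add_le_iff

theorem isSG_zero_of_forall_sgRep {y : ℕ} (hrep : ∀ x, 0 < x → x < a₃ → SGRep n a₂ a₃ x 0)
    (hy : IsBreak n 0 a₂ a₃ y) : IsSG n 0 a₂ a₃ := by
  have hya₃ : 1 < a₃ := by have := hy.1; have := hy.2.1; omega
  exact ⟨fun x hx₀ hxa₃ => ⟨0, le_rfl, hrep x hx₀ hxa₃⟩,
    ⟨1, one_pos, hya₃, hrep 1 one_pos hya₃, fun _ h => absurd h (Nat.not_lt_zero _)⟩,
    ⟨y, hy⟩⟩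

theorem sgRep_zero_of_lt {x : ℕ} (ha₂ : 0 < a₂) (hx : x < a₃) :
    SGRep (a₂ + a₃ / a₂ - 2) a₂ a₃ x 0 := by
  rw [sgRep_iff, zero_mul, add_zero, add_zero]
  have hr : x % a₂ < a₂ := Nat.mod_lt x ha₂
  rcases (Nat.div_le_div_right (c := a₂) hx.le).lt_or_eq with hq | hq
  · omega
  · have hx' := Nat.div_add_mod' x a₂
    have ha₃' := Nat.div_add_mod' a₃ a₂
    have hC₁ : a₃ % a₂ < a₂ := Nat.mod_lt a₃ ha₂
    rw [hq] at hx'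
    omega

theorem sgBreakRep_zero_of_lt_mul_sub_one {k z : ℕ} (ha₂ : 0 < a₂) (hz : z < k * a₂ - 1) :
    SGBreakRep (a₂ + k - 2) a₂ a₃ z 0 := by
  rw [sgBreakRep_iff, zero_mul, add_zero, add_zero]
  have hq : z / a₂ < k := (Nat.div_lt_iff_lt_mul ha₂).2 (by omega)
  have hz' := Nat.div_add_mod' z a₂
  have hr := Nat.mod_lt z ha₂
  generalize z / a₂ = q, z % a₂ = r at *
  obtain ⟨d, rfl⟩ := Nat.exists_eq_add_of_lt hq
  rcases Nat.eq_zero_or_pos d with rfl | hd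
  · rw [add_zero, add_one_mul] at hz
    omega
  · omega

theorem isBreak_zero_div_mul_sub_one (ha₂ : 0 < a₂) (ha₃ : a₂ < a₃)
    (h : a₃ % a₂ = 0 ∨ a₂ - a₃ / a₂ ≤ a₃ % a₂) :
    IsBreak (a₂ + a₃ / a₂ - 2) 0 a₂ a₃ (a₃ / a₂ * a₂ - 1) := by
  have ha₃_eq := Nat.div_add_mod' a₃ a₂
  have hC₁ := Nat.mod_lt a₃ ha₂
  have hC₂ : 0 < a₃ / a₂ := Nat.div_pos ha₃.le ha₂
  generalize a₃ / a₂ = C₂, a₃ % a₂ = C₁ at *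
  have hy₀ : 2 ≤ C₂ * a₂ := by omega
  have hn : 3 ≤ C₂ + a₂ := by nlinarith
  refine ⟨by omega, by omega, fun j hj => ?_⟩
  rw [sgBreakRep_iff]
  interval_cases j
  · rw [zero_mul, add_zero, Nat.mul_sub_one_div_add_mod ha₂ hC₂]
    omega
  · rw [one_mul, ← ha₃_eq]
    rcases Nat.eq_zero_or_pos C₁ with hC₁₀ | hC₁₀
    · have hy : C₂ * a₂ - 1 + (C₂ * a₂ + C₁) = 2 * C₂ * a₂ - 1 := by
        rw [two_mul, add_mul]; omega
      rw [hy, Nat.mul_sub_one_div_add_mod ha₂ (by omega)]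
      omega
    · have hy : C₂ * a₂ - 1 + (C₂ * a₂ + C₁) = 2 * C₂ * a₂ + (C₁ - 1) := by
        rw [two_mul, add_mul]; omega
      rw [hy, Nat.mul_add_div_add_mod (by omega)]
      omega

end StrideGenerator

theorem stmt8 (a₂ a₃ : ℕ) (ha₂ : 2 ≤ a₂) (ha₃ : a₂ < a₃)
    (h : a₃ % a₂ = 0 ∨ a₂ - a₃ / a₂ ≤ a₃ % a₂) :
    IsSG (a₂ + a₃ / a₂ - 2) 0 a₂ a₃ ∧
    IsLeast {y : ℕ | IsBreak (a₂ + a₃ / a₂ - 2) 0 a₂ a₃ y} (a₃ / a₂ * a₂ - 1) := by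
  have ha₂pos : 0 < a₂ := by omega
  have hbreak := isBreak_zero_div_mul_sub_one ha₂pos ha₃ h
  refine ⟨isSG_zero_of_forall_sgRep (fun x _ hx => sgRep_zero_of_lt ha₂pos hx) hbreak,
    hbreak, fun z hz => ?_⟩
  by_contra! hlt
  exact hz.2.2 0 (Nat.zero_le _) (sgBreakRep_zero_of_lt_mul_sub_one ha₂pos hlt)
end

section
/- Let {1, a₂, a₃} (1 < a₂ < a₃) be an n-stride generator SG(n,p). (a) If a₃ > 2·a₂, then every break y of SG(n,p) satisfies a₃ − a₂ ≤ y < (a₃ − a₂) + n. (b) If a₃ < 2·a₂, then for every break y of SG(n,p) there exist a break y₀ with a₃ − a₂ ≤ y₀ < (a₃ − a₂) + n and a natural number i such that y = y₀ + i·(a₃ − a₂), and moreover y₀ + m·(a₃ − a₂) is a break of SG(n,p) for every m with 0 ≤ m ≤ i. -/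
/-!
Write `d = a₃ - a₂`. Every break exceeds `n - 1`, so `a₃ > n`. Hence a representation of
`y + a₂ + i·a₃` with at most `n + i` coins and `i > 0` cannot consist of units alone, and
dropping one `a₂` from it leaves a representation of `y + i·a₃` with one coin fewer. Applied through (SG1) to `x = y + a₂` this
shows that every break satisfies `y ≥ d`; applied to `y - d + (j + 1)·a₃ = y + a₂ + j·a₃` it
shows that a break `y ≥ d + n` steps down to the break `y - d`. Descending until the window
`[d, d + n)` is reached gives (b), and when `a₃ > 2·a₂` a single step would already leave
`[d, a₃)`, which gives (a).
-/

section

variable {n p a₂ a₃ y j : ℕ}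

theorem sgBreakRep_succ_iff :
    SGBreakRep n a₂ a₃ y (j + 1) ↔ SGRep n a₂ a₃ (y + a₃) j := by
  unfold SGBreakRep SGRep
  constructor <;> rintro ⟨c₁, c₂, h, hc⟩ <;> exact ⟨c₁, c₂, by linarith, by omega⟩

theorem sgBreakRep_zero_of_lt (h : y < n) : SGBreakRep n a₂ a₃ y 0 :=
  ⟨y, 0, by simp, by omega⟩

theorem not_sgBreakRep_zero (hn : 0 < n) (hny : n ≤ y) (hya₂ : y < a₂) :
    ¬ SGBreakRep n a₂ a₃ y 0 := by
  rintro ⟨c₁, c₂, h, hc⟩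
  rcases Nat.eq_zero_or_pos c₂ with rfl | hc₂
  · omega
  · nlinarith

theorem add_le_mul_of_lt (hj : 0 < j) (ha₃ : n < a₃) : n + j ≤ j * a₃ := by
  nlinarith

theorem sgBreakRep_of_sgRep_add (ha₂ : 0 < a₂) (ha₃ : n < a₃)
    (h : SGRep n a₂ a₃ (y + a₂) j) : SGBreakRep n a₂ a₃ y j := by
  obtain ⟨c₁, c₂, heq, hc⟩ := h
  rcases c₂ with _ | k
  · rcases Nat.eq_zero_or_pos j with rfl | hj
    · exact sgBreakRep_zero_of_lt (by omega)
    · have := add_le_mul_of_lt hj ha₃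
      omega
  · exact ⟨c₁, k, by linarith, by omega⟩

theorem IsBreak.n_le (hy : IsBreak n p a₂ a₃ y) : n ≤ y := by
  by_contra h
  exact hy.2.2 0 (Nat.zero_le _) (sgBreakRep_zero_of_lt (by omega))

theorem IsBreak.n_lt_a₃ (hy : IsBreak n p a₂ a₃ y) : n < a₃ :=
  hy.n_le.trans_lt hy.2.1

theorem IsBreak.sub_le (hcov : ∀ x, 0 < x → x < a₃ → ∃ i ≤ p, SGRep n a₂ a₃ x i)
    (ha₂ : 0 < a₂) (hy : IsBreak n p a₂ a₃ y) : a₃ - a₂ ≤ y := by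
  by_contra h
  obtain ⟨i, hi, hrep⟩ := hcov (y + a₂) (by omega) (by omega)
  exact hy.2.2 i (by omega) (sgBreakRep_of_sgRep_add ha₂ hy.n_lt_a₃ hrep)

theorem IsBreak.sub (hn : 0 < n) (ha₂ : 0 < a₂) (ha₃ : a₂ < a₃)
    (hy : IsBreak n p a₂ a₃ y) (h : a₃ - a₂ + n ≤ y) :
    IsBreak n p a₂ a₃ (y - (a₃ - a₂)) := by
  have := hy.n_le
  have := hy.2.1
  refine ⟨by omega, by omega, ?_⟩
  rintro (_ | j) hj hrep
  · exact not_sgBreakRep_zero hn (by omega) (by omega) hrep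
  · rw [sgBreakRep_succ_iff, show y - (a₃ - a₂) + a₃ = y + a₂ by omega] at hrep
    exact hy.2.2 j (by omega) (sgBreakRep_of_sgRep_add ha₂ hy.n_lt_a₃ hrep)

theorem IsBreak.exists_eq_add_mul
    (hcov : ∀ x, 0 < x → x < a₃ → ∃ i ≤ p, SGRep n a₂ a₃ x i)
    (hn : 0 < n) (ha₂ : 0 < a₂) (ha₃ : a₂ < a₃) (hy : IsBreak n p a₂ a₃ y) :
    ∃ y₀ i : ℕ, a₃ - a₂ ≤ y₀ ∧ y₀ < (a₃ - a₂) + n ∧ y = y₀ + i * (a₃ - a₂) ∧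
      ∀ m ≤ i, IsBreak n p a₂ a₃ (y₀ + m * (a₃ - a₂)) := by
  induction y using Nat.strong_induction_on with
  | _ y ih =>
    by_cases hlt : y < a₃ - a₂ + n
    · exact ⟨y, 0, hy.sub_le hcov ha₂, hlt, by simp,
        fun m hm => by simpa [Nat.le_zero.mp hm] using hy⟩
    obtain ⟨y₀, i, hlo, hhi, hsub, hbreaks⟩ :=
      ih _ (by omega) (hy.sub hn ha₂ ha₃ (by omega))
    have hy_eq : y = y₀ + (i + 1) * (a₃ - a₂) := by rw [add_one_mul]; omega
    refine ⟨y₀, i + 1, hlo, hhi, hy_eq, fun m hm => ?_⟩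
    rcases hm.lt_or_eq with hm | rfl
    · exact hbreaks m (Nat.lt_succ_iff.mp hm)
    · exact hy_eq ▸ hy

end

theorem stmt11 (n p a₂ a₃ : ℕ) (hn : 1 ≤ n) (ha₂ : 1 < a₂) (ha₃ : a₂ < a₃)
    (hsg : IsSG n p a₂ a₃) :
    (2 * a₂ < a₃ → ∀ y : ℕ, IsBreak n p a₂ a₃ y →
      a₃ - a₂ ≤ y ∧ y < (a₃ - a₂) + n) ∧
    (a₃ < 2 * a₂ → ∀ y : ℕ, IsBreak n p a₂ a₃ y →
      ∃ y₀ i : ℕ, a₃ - a₂ ≤ y₀ ∧ y₀ < (a₃ - a₂) + n ∧ y = y₀ + i * (a₃ - a₂) ∧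
        ∀ m ≤ i, IsBreak n p a₂ a₃ (y₀ + m * (a₃ - a₂))) := by
  have hdesc := fun y (hy : IsBreak n p a₂ a₃ y) =>
    hy.exists_eq_add_mul hsg.1 hn (by omega) ha₃
  refine ⟨fun hwide y hy => ⟨hy.sub_le hsg.1 (by omega), ?_⟩, fun _ => hdesc⟩
  obtain ⟨y₀, i, hlo, hhi, rfl, -⟩ := hdesc y hy
  rcases i with _ | i
  · simpa using hhi
  · have := hy.2.1
    rw [add_one_mul] at this
    omega
end

section
/- If {1, a₂, a₃} (1 < a₂ < a₃) is an n-stride generator SG(n,p), then a₂ ≤ n·(p+1) + 1. -/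
/-!
Every `0 < x < a₃` has a cheap representation at some level `i ≤ p`. Reducing it to the
canonical form `x + i a₃ = q a₂ + r` with `r < a₂` forces `i ≤ q`, hence `r ≤ n`, and if
`r = n` then `q = i`, so the same `x` is already cheaply represented at level `i - 1`.
Descending to the least level, `x + i a₃` is congruent mod `a₂` to some `c < n`, or to `n`
at level `0`. Since `x ↦ (i, c)` is injective on `1, …, a₂`, we get
`a₂ ≤ (p + 1) n + 1`.
-/

lemma Nat.div_add_mod_le_of_eq {v a c₁ c₂ : ℕ} (ha : 0 < a) (hv : v = c₂ * a + c₁) :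
    v / a + v % a ≤ c₂ + c₁ := by
  have hdiv : v / a = c₁ / a + c₂ := by
    rw [hv, Nat.add_comm, Nat.add_mul_div_right _ _ ha]
  have hmod : v % a = c₁ % a := by
    rw [hv, Nat.add_comm, Nat.add_mul_mod_self_right]
  have := Nat.div_add_mod c₁ a
  have := Nat.le_mul_of_pos_left (c₁ / a) ha
  omega

namespace SGRep

variable {n a₂ a₃ x i : ℕ}

lemma mod_lt_or_eq (ha : 0 < a₂) (h23 : a₂ ≤ a₃) (h : SGRep n a₂ a₃ x i) :
    (x + i * a₃) % a₂ < n ∨ x + i * a₃ = i * a₂ + n := by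
  obtain ⟨c₁, c₂, hc, hsum⟩ := h
  have hcanon := Nat.div_add_mod_le_of_eq ha hc
  have hlevel : i ≤ (x + i * a₃) / a₂ := by
    rw [Nat.le_div_iff_mul_le ha]
    have := Nat.mul_le_mul_left i h23
    omega
  have hv := Nat.div_add_mod (x + i * a₃) a₂
  rcases Nat.lt_or_ge ((x + i * a₃) % a₂) n with hr | hr
  · exact Or.inl hr
  · right
    have hq : (x + i * a₃) / a₂ = i := by omega
    rw [hq, Nat.mul_comm] at hv
    omega

lemma of_eq_succ (h23 : a₂ ≤ a₃) {k : ℕ} (h : x + (k + 1) * a₃ = (k + 1) * a₂ + n) :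
    SGRep n a₂ a₃ x k := by
  have := Nat.mul_le_mul_left k h23
  refine ⟨n - (a₃ - a₂), k, ?_, by omega⟩
  rw [Nat.succ_mul, Nat.succ_mul] at h
  omega

lemma exists_modEq (ha : 0 < a₂) (h23 : a₂ ≤ a₃) (h : SGRep n a₂ a₃ x i) :
    ∃ j ≤ i, ∃ c, (c < n ∨ j = 0 ∧ c = n) ∧ x + j * a₃ ≡ c [MOD a₂] := by
  induction i with
  | zero =>
    rcases h.mod_lt_or_eq ha h23 with hr | hv
    · exact ⟨0, le_rfl, _, Or.inl hr, (Nat.mod_modEq _ _).symm⟩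
    · exact ⟨0, le_rfl, n, Or.inr ⟨rfl, rfl⟩, by rw [hv, Nat.zero_mul, Nat.zero_add]⟩
  | succ k ih =>
    rcases h.mod_lt_or_eq ha h23 with hr | hv
    · exact ⟨k + 1, le_rfl, _, Or.inl hr, (Nat.mod_modEq _ _).symm⟩
    · obtain ⟨j, hj, hc⟩ := ih (of_eq_succ h23 hv)
      exact ⟨j, hj.trans k.le_succ, hc⟩

end SGRep

lemma Nat.ModEq.eq_of_mem_Icc_one {m x y : ℕ} (h : x ≡ y [MOD m])
    (hx : x ∈ Finset.Icc 1 m) (hy : y ∈ Finset.Icc 1 m) : x = y := by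
  rw [Finset.mem_Icc] at hx hy
  have h' : x - 1 ≡ y - 1 [MOD m] :=
    Nat.ModEq.add_right_cancel' 1 (by rwa [Nat.sub_add_cancel hx.1, Nat.sub_add_cancel hy.1])
  have := h'.eq_of_lt_of_lt (by omega) (by omega)
  omega

theorem stmt15_general (n p a₂ a₃ : ℕ) (ha₃ : a₂ < a₃)
    (hsg : IsSG n p a₂ a₃) :
    a₂ ≤ n * (p + 1) + 1 := by
  set slots : Finset (ℕ × ℕ) := insert (0, n) (Finset.range (p + 1) ×ˢ Finset.range n)
  have hslot : ∀ x ∈ Finset.Icc 1 a₂, ∃ s ∈ slots, x + s.1 * a₃ ≡ s.2 [MOD a₂] := by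
    intro x hx
    rw [Finset.mem_Icc] at hx
    obtain ⟨i, hip, hi⟩ := hsg.1 x (by omega) (by omega)
    obtain ⟨j, hji, c, hc, hmod⟩ := hi.exists_modEq (by omega) ha₃.le
    refine ⟨(j, c), ?_, hmod⟩
    rcases hc with hc | ⟨rfl, rfl⟩
    · exact Finset.mem_insert_of_mem (Finset.mem_product.2
        ⟨Finset.mem_range.2 (by omega), Finset.mem_range.2 hc⟩)
    · exact Finset.mem_insert_self _ _
  choose! slot hslot_mem hslot_modEq using hslot
  have hinj : Set.InjOn slot (Finset.Icc 1 a₂) := fun x hx y hy hxy =>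
    Nat.ModEq.eq_of_mem_Icc_one (Nat.ModEq.add_right_cancel' _
      ((hslot_modEq x hx).trans (hxy ▸ hslot_modEq y hy).symm)) hx hy
  calc a₂ = (Finset.Icc 1 a₂).card := by simp
    _ ≤ slots.card := Finset.card_le_card_of_injOn slot hslot_mem hinj
    _ ≤ (p + 1) * n + 1 := by
      refine (Finset.card_insert_le _ _).trans ?_
      rw [Finset.card_product, Finset.card_range, Finset.card_range]
    _ = n * (p + 1) + 1 := by ring

theorem stmt15 (n p a₂ a₃ : ℕ) (hn : 1 ≤ n) (ha₂ : 1 < a₂) (ha₃ : a₂ < a₃)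
    (hsg : IsSG n p a₂ a₃) :
    a₂ ≤ n * (p + 1) + 1 :=
  stmt15_general n p a₂ a₃ ha₃ hsg
end

section
/- For all natural numbers n > 1 and k > 1, the set {1, (k−1)·n, k·n} is an n-stride generator SG(n, p) for some order p ≤ k − 1. Consequently, for any n > 1 and any X there is an n-stride generator of length (i.e. with a₃) at least X. -/
/-!
Writing `N = c₂ * a₂ + c₁` with the fewest coins `c₂ + c₁` is done greedily, with
`N / a₂ + N % a₂` coins. For `a₂ = (m + 1) n`, `a₃ = (m + 2) n` this makes every question about
representations a computation with quotients and remainders: `x = q n + r` with `q ≥ 1` is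
reached with `m + 1 - q` strides, `x = n + 1` needs exactly `m` strides, and `y = a₃ - 1`,
being `-1` modulo `n ∣ a₂`, always costs at least `n - 1` ones besides the `j + 1` copies of `a₂`
that fit below `y + j a₃`.
-/

theorem Nat.div_add_mod_le_add {a N c₁ c₂ : ℕ} (h : c₂ * a + c₁ = N) :
    N / a + N % a ≤ c₂ + c₁ := by
  rcases Nat.eq_zero_or_pos a with rfl | ha
  · simp_all
  have hc₂ : c₂ ≤ N / a := (Nat.le_div_iff_mul_le ha).2 (by omega)
  have hN := Nat.div_add_mod N a
  nlinarith

theorem Nat.div_add_mod_of_lt {a q r : ℕ} (hr : r < a) :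
    (q * a + r) / a + (q * a + r) % a = q + r := by
  have ha : 0 < a := by omega
  rw [Nat.mul_add_mod_self_right, Nat.mod_eq_of_lt hr, mul_comm, Nat.mul_add_div ha,
    Nat.div_eq_of_lt hr, add_zero]

theorem SGRep.div_add_mod_le {n a₂ a₃ x i : ℕ} (h : SGRep n a₂ a₃ x i) :
    (x + i * a₃) / a₂ + (x + i * a₃) % a₂ ≤ n + i := by
  obtain ⟨c₁, c₂, hx, hc⟩ := h
  exact (Nat.div_add_mod_le_add hx.symm).trans hc

theorem SGBreakRep.div_add_mod_le {n a₂ a₃ y j : ℕ} (h : SGBreakRep n a₂ a₃ y j) :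
    (y + j * a₃) / a₂ + (y + j * a₃) % a₂ ≤ n + j - 1 := by
  obtain ⟨c₁, c₂, hy, hc⟩ := h
  exact (Nat.div_add_mod_le_add hy.symm).trans hc

section Stride

variable {n : ℕ} (m : ℕ)

theorem exists_sgRep_stride {x : ℕ} (hx : x < (m + 2) * n) :
    ∃ i ≤ m, SGRep n ((m + 1) * n) ((m + 2) * n) x i := by
  rcases le_or_gt x n with hxn | hxn
  · exact ⟨0, Nat.zero_le _, x, 0, by ring, by omega⟩
  have hn : 0 < n := by nlinarith
  obtain ⟨q, r, hr, rfl⟩ : ∃ q r, r < n ∧ x = (q + 1) * n + r := by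
    refine ⟨x / n - 1, x % n, Nat.mod_lt x hn, ?_⟩
    have := Nat.div_add_mod x n
    have : 1 ≤ x / n := (Nat.one_le_div_iff hn).2 hxn.le
    rw [Nat.sub_add_cancel this]
    linarith
  have hq : q + 1 < m + 2 := by nlinarith
  obtain ⟨i, rfl⟩ : ∃ i, m = q + i := ⟨m - q, by omega⟩
  exact ⟨i, by omega, r, i + 1, by ring, by omega⟩

theorem sgRep_stride_succ (hn : 2 ≤ n) :
    SGRep n ((m + 1) * n) ((m + 2) * n) (n + 1) m :=
  ⟨1, m + 1, by ring, by omega⟩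

theorem not_sgRep_stride_succ {i : ℕ} (hn : 2 ≤ n) (hi : i < m) :
    ¬ SGRep n ((m + 1) * n) ((m + 2) * n) (n + 1) i := by
  intro h
  have hr : (i + 1) * n + 1 < (m + 1) * n := by nlinarith
  have hN : n + 1 + i * ((m + 2) * n) = i * ((m + 1) * n) + ((i + 1) * n + 1) := by ring
  have := h.div_add_mod_le
  rw [hN, Nat.div_add_mod_of_lt hr] at this
  nlinarith

theorem not_sgBreakRep_stride (j : ℕ) (hn : 0 < n) :
    ¬ SGBreakRep n ((m + 1) * n) ((m + 2) * n) ((m + 2) * n - 1) j := by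
  intro h
  obtain ⟨t, rfl⟩ : ∃ t, n = t + 1 := ⟨n - 1, by omega⟩
  set N := (m + 2) * (t + 1) - 1 + j * ((m + 2) * (t + 1))
  have hN : N = t + (m + 1 + j * (m + 2)) * (t + 1) := by
    simp only [N]
    rw [show (m + 2) * (t + 1) = (m + 1) * (t + 1) + t + 1 by ring, Nat.add_sub_cancel]
    ring
  have hmod : N % ((m + 1) * (t + 1)) % (t + 1) = t := by
    rw [Nat.mod_mod_of_dvd N (dvd_mul_left _ _), hN, Nat.add_mul_mod_self_right,
      Nat.mod_eq_of_lt (Nat.lt_succ_self t)]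
  have hdiv : j + 1 ≤ N / ((m + 1) * (t + 1)) :=
    (Nat.le_div_iff_mul_le (by positivity)).2 (by rw [hN]; nlinarith)
  have hcost : N / ((m + 1) * (t + 1)) + N % ((m + 1) * (t + 1)) ≤ t + 1 + j - 1 :=
    h.div_add_mod_le
  have := Nat.mod_le (N % ((m + 1) * (t + 1))) (t + 1)
  omega

theorem isSG_stride (hn : 2 ≤ n) : IsSG n m ((m + 1) * n) ((m + 2) * n) := by
  have hn₀ : 0 < n := by omega
  refine ⟨fun x _ hx => exists_sgRep_stride m hx,
    ⟨n + 1, by omega, by nlinarith, sgRep_stride_succ m hn,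
      fun i hi => not_sgRep_stride_succ m hn hi⟩,
    ⟨(m + 2) * n - 1, ?_, ?_, fun j _ => not_sgBreakRep_stride m j hn₀⟩⟩ <;>
  · have : 2 * n ≤ (m + 2) * n := by nlinarith
    omega

end Stride

theorem stmt16 :
    (∀ n k : ℕ, 1 < n → 1 < k → ∃ p : ℕ, p ≤ k - 1 ∧ IsSG n p ((k - 1) * n) (k * n)) ∧
    (∀ n X : ℕ, 1 < n → ∃ a₂ a₃ p : ℕ, X ≤ a₃ ∧ 1 < a₂ ∧ a₂ < a₃ ∧ IsSG n p a₂ a₃) := by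
  refine ⟨fun n k hn hk => ?_, fun n X hn => ?_⟩
  · obtain ⟨m, rfl⟩ : ∃ m, k = m + 2 := ⟨k - 2, by omega⟩
    exact ⟨m, by omega, isSG_stride m hn⟩
  · exact ⟨(X + 1) * n, (X + 2) * n, X, by nlinarith, by nlinarith, by nlinarith, isSG_stride X hn⟩
end
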